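/- arXiv:1908.01463 — 3 statements merged into one kernel-verified Lean document; each statement's English description precedes it below -/
import Mathlib

section
/- Let 0 < d < 1, α > 0, Δ > 0. Define Q_k = kΔ for k ≥ 0, A_0 = αΔ, and A_k = d^k·αΔ for k ≥ 1, and let A_{k,total} = A_0 + A_1 + ... + A_{k-1}. Then for all k ≥ 1, A_k < (α(Q_{k+1}^2 - Q_k^2) - A_{k,total}(Q_{k+1} - Q_k))/Q_{k+1}. -/
open Finset in
/-- Lemma 2: with `Q_k = kΔ` and `A_k = d^k αΔ`, the constraint (14) holds for all `k ≥ 1`: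
`A_k < (α(Q_{k+1}² - Q_k²) - A_{k,total}(Q_{k+1} - Q_k))/Q_{k+1}`,
where `A_{k,total} = A_0 + ⋯ + A_{k-1}`. -/
theorem stmt_2 (d α Δ : ℝ) (hd0 : 0 < d) (hd1 : d < 1) (hα : 0 < α) (hΔ : 0 < Δ)
    (Q A : ℕ → ℝ) (hQ : ∀ k, Q k = (k : ℝ) * Δ) (hA : ∀ k, A k = d ^ k * α * Δ)
    (Atotal : ℕ → ℝ) (hAtot : ∀ k, Atotal k = ∑ i ∈ Finset.range k, A i)
    (k : ℕ) (hk : 1 ≤ k) :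
    A k < (α * ((Q (k + 1)) ^ 2 - (Q k) ^ 2) - Atotal k * (Q (k + 1) - Q k)) / Q (k + 1) := by
  have hQpos : 0 < Q (k + 1) := by rw [hQ]; positivity
  rw [lt_div_iff₀ hQpos]
  have hS : Atotal k ≤ (k : ℝ) * (α * Δ) := by
    rw [hAtot]
    calc ∑ i ∈ range k, A i ≤ ∑ i ∈ range k, α * Δ := by
          refine sum_le_sum fun i _ => ?_
          rw [hA]
          have h1 : d ^ i ≤ 1 := pow_le_one₀ hd0.le hd1.le
          nlinarith [mul_nonneg (sub_nonneg.2 h1) (mul_pos hα hΔ).le]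
      _ = (k : ℝ) * (α * Δ) := by simp [mul_comm]
  have hdk : d ^ k < 1 := pow_lt_one₀ hd0.le hd1 (by omega)
  have hk1 : (1 : ℝ) ≤ (k : ℝ) := by exact_mod_cast hk
  rw [hA, hQ, hQ]
  push_cast
  nlinarith [mul_le_mul_of_nonneg_right hS hΔ.le,
    mul_pos (sub_pos.2 hdk) (mul_pos (mul_pos hα hΔ) hΔ),
    mul_pos (by linarith : (0:ℝ) < (k:ℝ) + 1) (mul_pos (sub_pos.2 hdk) (mul_pos (mul_pos hα hΔ) hΔ))]
end

section
/- Let 0 < d < 1, α > 0, Δ > 0, Q_k = kΔ, A_{k,total} = αΔ(1 - d^k)/(1 - d), and β_{k-1} = 1 + αQ_k^2 - A_{k,total}·Q_k for k ≥ 1 (with β_0 = 1). Then β_{k-1} = 1 + αk²Δ² - kαΔ²(1 - d^k)/(1 - d), and β_k > β_{k-1} for all k ≥ 1. -/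
/-- The source-coding parameters `β_{k-1} = 1 + αQ_k² - A_{k,total}Q_k` (with `Q_k = kΔ`,
`A_{k,total} = αΔ(1-d^k)/(1-d)`) satisfy
`β_{k-1} = 1 + αk²Δ² - kαΔ²(1-d^k)/(1-d)` and are strictly increasing: `β_k > β_{k-1}`. -/
theorem stmt_3 (d α Δ : ℝ) (hd0 : 0 < d) (hd1 : d < 1) (hα : 0 < α) (hΔ : 0 < Δ)
    (Q Atotal β : ℕ → ℝ)
    (hQ : ∀ k, Q k = (k : ℝ) * Δ)
    (hAtot : ∀ k, Atotal k = α * Δ * (1 - d ^ k) / (1 - d))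
    (hβ : ∀ k, 1 ≤ k → β (k - 1) = 1 + α * (Q k) ^ 2 - Atotal k * Q k)
    (hβ0 : β 0 = 1) :
    ∀ k, 1 ≤ k →
      β (k - 1) = 1 + α * (k : ℝ) ^ 2 * Δ ^ 2 - (k : ℝ) * α * Δ ^ 2 * (1 - d ^ k) / (1 - d) ∧
      β k > β (k - 1) := by
  have hne : (1 : ℝ) - d ≠ 0 := by linarith
  have hd' : d ≠ 1 := by linarith
  have hgs : ∀ n : ℕ, (1 - d ^ n) / (1 - d) = ∑ i ∈ Finset.range n, d ^ i := by
    intro n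
    rw [geom_sum_eq hd', div_eq_div_iff hne (sub_ne_zero.mpr hd')]
    ring
  have hform : ∀ k : ℕ, 1 ≤ k →
      β (k - 1) = 1 + α * (k : ℝ) ^ 2 * Δ ^ 2 - (k : ℝ) * α * Δ ^ 2 * (1 - d ^ k) / (1 - d) := by
    intro k hk
    rw [hβ k hk, hQ, hAtot]
    field_simp
  intro k hk
  refine ⟨hform k hk, ?_⟩
  have h1 : β (k - 1) = 1 + α * (k : ℝ) ^ 2 * Δ ^ 2
      - (k : ℝ) * α * Δ ^ 2 * ((1 - d ^ k) / (1 - d)) := by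
    rw [hform k hk]; ring
  have h2 : β k = 1 + α * ((k : ℝ) + 1) ^ 2 * Δ ^ 2
      - ((k : ℝ) + 1) * α * Δ ^ 2 * ((1 - d ^ (k + 1)) / (1 - d)) := by
    have := hform (k + 1) (by omega)
    simp only [Nat.add_sub_cancel] at this
    rw [this]
    push_cast
    ring
  rw [h1, h2, hgs, hgs]
  rw [Finset.sum_range_succ]
  set S : ℝ := ∑ i ∈ Finset.range k, d ^ i with hS
  have hSle : S ≤ (k : ℝ) := by
    calc S ≤ ∑ i ∈ Finset.range k, (1 : ℝ) :=
          Finset.sum_le_sum fun i _ => pow_le_one₀ hd0.le hd1.le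
      _ = (k : ℝ) := by simp
  have hdk : d ^ k < 1 := pow_lt_one₀ hd0.le hd1 (by omega)
  have hk1 : (1 : ℝ) ≤ (k : ℝ) := by exact_mod_cast hk
  have hΔ2 : 0 < α * Δ ^ 2 := by positivity
  nlinarith [mul_pos hΔ2 (mul_pos (by linarith : (0:ℝ) < (k:ℝ) + 1) (by linarith : (0:ℝ) < 1 - d ^ k))]
end

section
/- The two-level lower bound constant exceeds the one-level constant: sup over q₂ > q₁ > 0, τ > 0 of [log(1 + q₁²/(1+τ(1+q₁²)))/q₁ + log(1 + τq₂²/(1+τ))/q₂] is strictly greater than sup_{q>0} log(1+q²)/q. -/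
open Real

private lemma log_key : ∀ q : ℝ, 0 < q → Real.log (1 + q ^ 2) ≤ 17/20 * q := by
  intro q hq
  rw [Real.log_le_iff_le_exp (by positivity)]
  have h := Real.sum_le_exp_of_nonneg (show (0:ℝ) ≤ 17/20 * q by positivity) 5
  simp [Finset.sum_range_succ, Nat.factorial] at h
  nlinarith [sq_nonneg q, sq_nonneg (q - 2), sq_nonneg (q^2 - 4*q), sq_nonneg (q*(q-2)),
    mul_pos hq hq, sq_nonneg (q - 1), hq.le]

private lemma exp_le_pow (r : ℝ) (h0 : 0 ≤ r) (h32 : r < 32) :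
    Real.exp r ≤ (32 / (32 - r)) ^ 32 := by
  have hpos : 0 < 32 - r := by linarith
  have h1 : Real.exp (r / 32) ≤ 32 / (32 - r) := by
    have h2 : 1 - r / 32 ≤ Real.exp (-(r / 32)) := by
      have := Real.add_one_le_exp (-(r / 32)); linarith
    have h3 : 0 < 1 - r / 32 := by have : r / 32 < 1 := (div_lt_one (by norm_num)).mpr h32; linarith
    have h4 : Real.exp (r / 32) ≤ 1 / (1 - r / 32) := by
      rw [Real.exp_neg] at h2
      rw [le_div_iff₀ h3]
      calc Real.exp (r/32) * (1 - r/32) ≤ Real.exp (r/32) * (Real.exp (r/32))⁻¹ := by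
            exact mul_le_mul_of_nonneg_left h2 (Real.exp_pos _).le
        _ = 1 := mul_inv_cancel₀ (Real.exp_pos _).ne'
    calc Real.exp (r / 32) ≤ 1 / (1 - r / 32) := h4
      _ = 32 / (32 - r) := by field_simp
  calc Real.exp r = (Real.exp (r / 32)) ^ (32 : ℕ) := by
        rw [← Real.exp_nat_mul]; ring_nf
    _ ≤ (32 / (32 - r)) ^ (32 : ℕ) := by
        exact pow_le_pow_left₀ (Real.exp_pos _).le h1 32

private lemma log_ge (A r : ℝ) (h0 : 0 ≤ r) (h32 : r < 32)
    (hA : (32 / (32 - r)) ^ 32 ≤ A) : r ≤ Real.log A := by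
  have hb : (0:ℝ) < 32 - r := by linarith
  have hApos : 0 < A := lt_of_lt_of_le (pow_pos (div_pos (by norm_num) hb) 32) hA
  rw [Real.le_log_iff_exp_le hApos]
  exact (exp_le_pow r h0 h32).trans hA

/-- The two-level lower bound constant strictly exceeds the one-level constant:
`sup_{q₂>q₁>0, τ>0} [log(1+q₁²/(1+τ(1+q₁²)))/q₁ + log(1+τq₂²/(1+τ))/q₂]
  > sup_{q>0} log(1+q²)/q`. -/
theorem stmt_9 :
    sSup {x : ℝ | ∃ q₁ > (0 : ℝ), ∃ q₂ > q₁, ∃ τ > (0 : ℝ),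
        x = Real.log (1 + q₁ ^ 2 / (1 + τ * (1 + q₁ ^ 2))) / q₁ +
            Real.log (1 + τ * q₂ ^ 2 / (1 + τ)) / q₂} >
      sSup {x : ℝ | ∃ q > (0 : ℝ), x = Real.log (1 + q ^ 2) / q} := by
  set A := {x : ℝ | ∃ q₁ > (0 : ℝ), ∃ q₂ > q₁, ∃ τ > (0 : ℝ),
        x = Real.log (1 + q₁ ^ 2 / (1 + τ * (1 + q₁ ^ 2))) / q₁ +
            Real.log (1 + τ * q₂ ^ 2 / (1 + τ)) / q₂} with hA
  set B := {x : ℝ | ∃ q > (0 : ℝ), x = Real.log (1 + q ^ 2) / q} with hB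
  -- Every element of B is ≤ 17/20
  have hBle : ∀ x ∈ B, x ≤ 17/20 := by
    rintro x ⟨q, hq, rfl⟩
    rw [div_le_iff₀ hq]
    exact log_key q hq
  have hBne : B.Nonempty := ⟨Real.log (1 + 1 ^ 2) / 1, 1, one_pos, rfl⟩
  have hsB : sSup B ≤ 17/20 := csSup_le hBne hBle
  -- A is bounded above by 17/10
  have hAbdd : BddAbove A := by
    refine ⟨17/10, ?_⟩
    rintro x ⟨q₁, hq₁, q₂, hq₂, τ, hτ, rfl⟩
    have hq₂p : 0 < q₂ := hq₁.trans hq₂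
    have h1 : Real.log (1 + q₁ ^ 2 / (1 + τ * (1 + q₁ ^ 2))) / q₁ ≤ 17/20 := by
      rw [div_le_iff₀ hq₁]
      refine le_trans ?_ (log_key q₁ hq₁)
      apply Real.log_le_log (by positivity)
      have hd : (1 : ℝ) ≤ 1 + τ * (1 + q₁ ^ 2) := by nlinarith [sq_nonneg q₁]
      nlinarith [div_le_self (by positivity : (0:ℝ) ≤ q₁ ^ 2) hd]
    have h2 : Real.log (1 + τ * q₂ ^ 2 / (1 + τ)) / q₂ ≤ 17/20 := by
      rw [div_le_iff₀ hq₂p]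
      refine le_trans ?_ (log_key q₂ hq₂p)
      apply Real.log_le_log (by positivity)
      have hd : τ * q₂ ^ 2 / (1 + τ) ≤ q₂ ^ 2 := by
        rw [div_le_iff₀ (by positivity)]
        nlinarith [sq_nonneg q₂]
      linarith
    linarith
  -- Witness element of A
  have hmem : Real.log (65/29) / (3/2) + Real.log (21/5) / 4 ∈ A := by
    refine ⟨3/2, by norm_num, 4, by norm_num, 1/4, by norm_num, ?_⟩
    norm_num
  have hwit : (263/300 : ℝ) ≤ Real.log (65/29) / (3/2) + Real.log (21/5) / 4 := by
    have l1 : (79/100 : ℝ) ≤ Real.log (65/29) := by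
      apply log_ge _ _ (by norm_num) (by norm_num)
      norm_num
    have l2 : (7/5 : ℝ) ≤ Real.log (21/5) := by
      apply log_ge _ _ (by norm_num) (by norm_num)
      norm_num
    have : (79/100 : ℝ) / (3/2) + (7/5) / 4 ≤
        Real.log (65/29) / (3/2) + Real.log (21/5) / 4 := by
      gcongr <;> norm_num
    linarith
  have hsA : (263/300 : ℝ) ≤ sSup A := le_trans hwit (le_csSup hAbdd hmem)
  calc sSup B ≤ 17/20 := hsB
    _ < 263/300 := by norm_num
    _ ≤ sSup A := hsA
end
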